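/- arXiv:2111.00154 — 2 statements merged into one kernel-verified Lean document; each statement's English description precedes it below -/
import Mathlib

section
/- For a complete bipartite graph K_{m,n}, every linear ordering σ of the vertices has total imbalance at least m·n + (m mod 2)·(n mod 2). -/
open Finset
open scoped Classical

noncomputable def vertexImbalance {V : Type*} [Fintype V] (G : SimpleGraph V)
    (σ : V ≃ Fin (Fintype.card V)) (v : V) : ℕ :=
  (((univ.filter fun u => G.Adj v u ∧ σ u < σ v).card : ℤ) -
   ((univ.filter fun u => G.Adj v u ∧ σ v < σ u).card : ℤ)).natAbs

noncomputable def totalImbalance {V : Type*} [Fintype V] (G : SimpleGraph V)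
    (σ : V ≃ Fin (Fintype.card V)) : ℕ :=
  ∑ v, vertexImbalance G σ v

private lemma card_filter_val_lt (m k : ℕ) (hk : k ≤ m) :
    ((univ : Finset (Fin m)).filter fun i : Fin m => (i : ℕ) < k).card = k := by
  rw [← Finset.card_image_of_injective ((univ : Finset (Fin m)).filter fun i : Fin m => (i : ℕ) < k)
      Fin.val_injective]
  have himg : (((univ : Finset (Fin m)).filter fun i : Fin m => (i : ℕ) < k).image Fin.val)
      = Finset.range k := by
    ext j
    simp only [Finset.mem_image, Finset.mem_filter, Finset.mem_univ, true_and, Finset.mem_range]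
    constructor
    · rintro ⟨i, hi, rfl⟩; exact hi
    · intro hj; exact ⟨⟨j, by omega⟩, hj, rfl⟩
  rw [himg, Finset.card_range]

private lemma mem_iff_lt_card {m : ℕ} (T : Finset (Fin m))
    (hT : ∀ i j : Fin m, j ≤ i → i ∈ T → j ∈ T) (i : Fin m) :
    i ∈ T ↔ (i : ℕ) < T.card := by
  constructor
  · intro hi
    have hsub : ((univ : Finset (Fin m)).filter fun j : Fin m => (j : ℕ) < (i : ℕ) + 1) ⊆ T := by
      intro j hj
      simp only [Finset.mem_filter, Finset.mem_univ, true_and] at hj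
      exact hT i j (by rw [Fin.le_def]; omega) hi
    have h := Finset.card_le_card hsub
    rw [card_filter_val_lt m ((i : ℕ) + 1) (by omega)] at h
    omega
  · intro h
    by_contra hi
    have hsub : T ⊆ (univ : Finset (Fin m)).filter fun j : Fin m => (j : ℕ) < (i : ℕ) := by
      intro j hj
      simp only [Finset.mem_filter, Finset.mem_univ, true_and]
      by_contra hji
      exact hi (hT j i (by rw [Fin.le_def]; omega) hj)
    have h2 := Finset.card_le_card hsub
    rw [card_filter_val_lt m (i : ℕ) (by omega)] at h2
    omega

private lemma abstract_bound (m n : ℕ) (T : Fin n → Finset (Fin m))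
    (hT : ∀ y, ∀ i j : Fin m, j ≤ i → i ∈ T y → j ∈ T y) :
    ((m * n + m % 2 * (n % 2) : ℕ) : ℤ) ≤
      (∑ i : Fin m, |(n : ℤ) - 2 * ((univ.filter fun y : Fin n => i ∈ T y).card : ℤ)|) +
      ∑ y : Fin n, |(m : ℤ) - 2 * ((T y).card : ℤ)| := by
  set r : Fin m → ℕ := fun i => (univ.filter fun y : Fin n => i ∈ T y).card with hr
  set P : Finset (Fin m) := univ.filter fun i => 2 * (i : ℕ) < m with hP
  set Q : Finset (Fin m) := univ.filter fun i => 2 * (i : ℕ) + 1 < m with hQ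
  set Mid : Finset (Fin m) := univ.filter fun i => 2 * (i : ℕ) + 1 = m with hM
  have ha : ∀ y, (T y).card ≤ m := fun y => by
    simpa using Finset.card_le_univ (T y)
  have hle_rev : ∀ i : Fin m, 2 * (i : ℕ) < m → i ≤ Fin.rev i := by
    intro i h; rw [Fin.le_def, Fin.val_rev]; omega
  have hdiff : ∀ i : Fin m, 2 * (i : ℕ) < m →
      r (Fin.rev i) + (univ.filter fun y : Fin n => i ∈ T y ∧ Fin.rev i ∉ T y).card = r i := by
    intro i h
    have h2 := Finset.card_filter_add_card_filter_not
      (s := univ.filter fun y : Fin n => i ∈ T y) (p := fun y => Fin.rev i ∈ T y)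
    rw [Finset.filter_filter, Finset.filter_filter] at h2
    have h1 : (univ.filter fun y : Fin n => i ∈ T y ∧ Fin.rev i ∈ T y)
        = univ.filter fun y : Fin n => Fin.rev i ∈ T y := by
      ext y
      simp only [Finset.mem_filter, Finset.mem_univ, true_and, and_iff_right_iff_imp]
      exact fun hy => hT y (Fin.rev i) i (hle_rev i h) hy
    rw [h1] at h2
    simp only [hr]
    omega
  -- per-y identity
  have hPc : ∀ y : Fin n, ((P.filter fun i => i ∈ T y ∧ Fin.rev i ∉ T y).card : ℕ)
      = min (T y).card (m - (T y).card) := by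
    intro y
    have hmem := mem_iff_lt_card (T y) (hT y)
    have he : (P.filter fun i => i ∈ T y ∧ Fin.rev i ∉ T y)
        = univ.filter fun i : Fin m => (i : ℕ) < min (T y).card (m - (T y).card) := by
      ext i
      have h1 := i.isLt
      have h2 := ha y
      simp only [hP, Finset.filter_filter, Finset.mem_filter, Finset.mem_univ, true_and,
        hmem, Fin.val_rev]
      omega
    rw [he, card_filter_val_lt]
    omega
  have hswap : ∑ y : Fin n, ((P.filter fun i => i ∈ T y ∧ Fin.rev i ∉ T y).card : ℕ)
      = ∑ i ∈ P, ((univ.filter fun y : Fin n => i ∈ T y ∧ Fin.rev i ∉ T y).card : ℕ) := by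
    simp only [Finset.card_filter]
    exact Finset.sum_comm
  have hA : ∑ y : Fin n, |(m : ℤ) - 2 * ((T y).card : ℤ)|
      = (m : ℤ) * n - 2 * ∑ i ∈ P, ((r i : ℤ) - (r (Fin.rev i) : ℤ)) := by
    have h1 : ∀ y : Fin n, |(m : ℤ) - 2 * ((T y).card : ℤ)|
        = (m : ℤ) - 2 * ((min (T y).card (m - (T y).card) : ℕ) : ℤ) := by
      intro y
      have h2 := ha y
      rcases abs_cases ((m : ℤ) - 2 * ((T y).card : ℤ)) with ⟨h3, _⟩ | ⟨h3, _⟩ <;>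
        · rw [h3]; push_cast; omega
    have h4 : ∑ i ∈ P, (((univ.filter fun y : Fin n => i ∈ T y ∧ Fin.rev i ∉ T y).card : ℕ) : ℤ)
        = ∑ i ∈ P, ((r i : ℤ) - (r (Fin.rev i) : ℤ)) := by
      refine Finset.sum_congr rfl fun i hi => ?_
      have h2i : 2 * (i : ℕ) < m := by
        simp only [hP, Finset.mem_filter, Finset.mem_univ, true_and] at hi
        exact hi
      have h5 := hdiff i h2i
      omega
    calc ∑ y : Fin n, |(m : ℤ) - 2 * ((T y).card : ℤ)|
        = ∑ y : Fin n, ((m : ℤ) - 2 * ((min (T y).card (m - (T y).card) : ℕ) : ℤ)) :=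
          Finset.sum_congr rfl fun y _ => h1 y
      _ = (m : ℤ) * n - 2 * ∑ y : Fin n, ((min (T y).card (m - (T y).card) : ℕ) : ℤ) := by
          rw [Finset.sum_sub_distrib, ← Finset.mul_sum, Finset.sum_const, Finset.card_univ,
            Fintype.card_fin, nsmul_eq_mul]
          ring
      _ = (m : ℤ) * n - 2 * ∑ i ∈ P, ((r i : ℤ) - (r (Fin.rev i) : ℤ)) := by
          rw [← h4]
          have hnat : ∑ y : Fin n, min (T y).card (m - (T y).card)
              = ∑ i ∈ P, ((univ.filter fun y : Fin n => i ∈ T y ∧ Fin.rev i ∉ T y).card : ℕ) := by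
            rw [← hswap]
            exact Finset.sum_congr rfl fun y _ => (hPc y).symm
          rw [← Nat.cast_sum, hnat, Nat.cast_sum]
  -- partition of univ
  have hnotP : (univ.filter fun i : Fin m => ¬ 2 * (i : ℕ) < m) = Q.image Fin.rev := by
    ext i
    simp only [Finset.mem_filter, Finset.mem_univ, true_and, Finset.mem_image, hQ]
    constructor
    · intro h
      refine ⟨Fin.rev i, ?_, Fin.rev_rev i⟩
      simp only [Finset.mem_filter, Finset.mem_univ, true_and, Fin.val_rev]
      have := i.isLt; omega
    · rintro ⟨a, haQ, rfl⟩
      have haQ' : 2 * (a : ℕ) + 1 < m := by simpa using haQ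
      rw [Fin.val_rev]; omega
  have hPQ : P.filter (fun i : Fin m => 2 * (i : ℕ) + 1 < m) = Q := by
    ext i
    simp only [hP, hQ, Finset.filter_filter, Finset.mem_filter, Finset.mem_univ, true_and]
    omega
  have hPMid : P.filter (fun i : Fin m => ¬ 2 * (i : ℕ) + 1 < m) = Mid := by
    ext i
    have := i.isLt
    simp only [hP, hM, Finset.filter_filter, Finset.mem_filter, Finset.mem_univ, true_and]
    omega
  have hsplit : ∀ f : Fin m → ℤ, ∑ i : Fin m, f i
      = (∑ i ∈ Q, f i + ∑ i ∈ Mid, f i) + ∑ i ∈ Q, f (Fin.rev i) := by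
    intro f
    have h1 := Finset.sum_filter_add_sum_filter_not univ (fun i : Fin m => 2 * (i : ℕ) < m) f
    have h2 := Finset.sum_filter_add_sum_filter_not P (fun i : Fin m => 2 * (i : ℕ) + 1 < m) f
    rw [hPQ, hPMid] at h2
    rw [hnotP] at h1
    rw [Finset.sum_image (fun a _ b _ h => Fin.rev_injective h)] at h1
    rw [hP] at h2
    linarith
  have hmid_rev : ∀ i ∈ Mid, Fin.rev i = i := by
    intro i hi
    simp only [hM, Finset.mem_filter, Finset.mem_univ, true_and] at hi
    rw [Fin.ext_iff, Fin.val_rev]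
    omega
  have hPQdelta : ∑ i ∈ P, ((r i : ℤ) - (r (Fin.rev i) : ℤ))
      = ∑ i ∈ Q, ((r i : ℤ) - (r (Fin.rev i) : ℤ)) := by
    have h2 := Finset.sum_filter_add_sum_filter_not P (fun i : Fin m => 2 * (i : ℕ) + 1 < m)
      (fun i => (r i : ℤ) - (r (Fin.rev i) : ℤ))
    rw [hPQ, hPMid] at h2
    have hz : ∑ i ∈ Mid, ((r i : ℤ) - (r (Fin.rev i) : ℤ)) = 0 :=
      Finset.sum_eq_zero fun i hi => by rw [hmid_rev i hi]; ring
    rw [hz] at h2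
    linarith
  have hMidcard : Mid.card = m % 2 := by
    rcases Nat.even_or_odd m with he | ho
    · obtain ⟨k, hk⟩ := he
      have hempty : Mid = ∅ := by
        ext i
        simp only [hM, Finset.mem_filter, Finset.mem_univ, true_and, Finset.notMem_empty,
          iff_false]
        omega
      rw [hempty]; simp; omega
    · obtain ⟨k, hk⟩ := ho
      have hsing : Mid = {⟨k, by omega⟩} := by
        ext i
        simp only [hM, Finset.mem_filter, Finset.mem_univ, true_and, Finset.mem_singleton,
          Fin.ext_iff]
        omega
      rw [hsing]; simp; omega
  have hmod : ∀ i : Fin m, ((n % 2 : ℕ) : ℤ) ≤ |(n : ℤ) - 2 * (r i : ℤ)| := by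
    intro i
    rcases abs_cases ((n : ℤ) - 2 * (r i : ℤ)) with ⟨h1, h2⟩ | ⟨h1, h2⟩ <;> rw [h1] <;> omega
  have hpair : ∀ i ∈ Q, 2 * ((r i : ℤ) - (r (Fin.rev i) : ℤ))
      ≤ |(n : ℤ) - 2 * (r i : ℤ)| + |(n : ℤ) - 2 * (r (Fin.rev i) : ℤ)| := by
    intro i _
    have h1 := le_abs_self ((n : ℤ) - 2 * (r (Fin.rev i) : ℤ))
    have h2 := neg_abs_le ((n : ℤ) - 2 * (r i : ℤ))
    linarith
  have hB : 2 * (∑ i ∈ Q, ((r i : ℤ) - (r (Fin.rev i) : ℤ))) + ((m % 2 : ℕ) : ℤ) * ((n % 2 : ℕ) : ℤ)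
      ≤ ∑ i : Fin m, |(n : ℤ) - 2 * (r i : ℤ)| := by
    rw [hsplit (fun i => |(n : ℤ) - 2 * (r i : ℤ)|)]
    have hQsum : 2 * (∑ i ∈ Q, ((r i : ℤ) - (r (Fin.rev i) : ℤ)))
        ≤ ∑ i ∈ Q, |(n : ℤ) - 2 * (r i : ℤ)| + ∑ i ∈ Q, |(n : ℤ) - 2 * (r (Fin.rev i) : ℤ)| := by
      rw [← Finset.sum_add_distrib, Finset.mul_sum]
      exact Finset.sum_le_sum hpair
    have hMsum : ((m % 2 : ℕ) : ℤ) * ((n % 2 : ℕ) : ℤ) ≤ ∑ i ∈ Mid, |(n : ℤ) - 2 * (r i : ℤ)| := by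
      have h6 := Finset.card_nsmul_le_sum Mid (fun i => |(n : ℤ) - 2 * (r i : ℤ)|)
        (((n % 2 : ℕ) : ℤ)) (fun i _ => hmod i)
      rw [hMidcard, nsmul_eq_mul] at h6
      exact_mod_cast h6
    linarith
  have hgoal : ∀ i : Fin m, ((univ.filter fun y : Fin n => i ∈ T y).card) = r i := fun i => rfl
  simp only [hgoal]
  rw [hA, hPQdelta, Nat.cast_add, Nat.cast_mul, Nat.cast_mul]
  linarith [hB]

theorem stmt1 (m n : ℕ)
    (σ : (Fin m ⊕ Fin n) ≃ Fin (Fintype.card (Fin m ⊕ Fin n))) :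
    m * n + (m % 2) * (n % 2) ≤ totalImbalance (completeBipartiteGraph (Fin m) (Fin n)) σ := by
  classical
  set G := completeBipartiteGraph (Fin m) (Fin n) with hG
  have hne : ∀ (x : Fin m) (y : Fin n), σ (Sum.inl x) ≠ σ (Sum.inr y) := by
    intro x y h
    exact absurd (σ.injective h) (by simp)
  have hVIL : ∀ x : Fin m, vertexImbalance G σ (Sum.inl x)
      = ((n : ℤ) - 2 * ((univ.filter fun y : Fin n =>
          σ (Sum.inl x) < σ (Sum.inr y)).card : ℤ)).natAbs := by
    intro x
    rw [vertexImbalance]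
    have h1 : (univ.filter fun u : Fin m ⊕ Fin n => G.Adj (Sum.inl x) u ∧ σ u < σ (Sum.inl x))
        = (univ.filter fun y : Fin n => σ (Sum.inr y) < σ (Sum.inl x)).map
            ⟨Sum.inr, Sum.inr_injective⟩ := by
      ext u
      rcases u with x' | y <;> simp [hG]
    have h2 : (univ.filter fun u : Fin m ⊕ Fin n => G.Adj (Sum.inl x) u ∧ σ (Sum.inl x) < σ u)
        = (univ.filter fun y : Fin n => σ (Sum.inl x) < σ (Sum.inr y)).map
            ⟨Sum.inr, Sum.inr_injective⟩ := by
      ext u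
      rcases u with x' | y <;> simp [hG]
    rw [h1, h2, Finset.card_map, Finset.card_map]
    have h3 : (univ.filter fun y : Fin n => σ (Sum.inr y) < σ (Sum.inl x)).card
        + (univ.filter fun y : Fin n => σ (Sum.inl x) < σ (Sum.inr y)).card = n := by
      have h5 := Finset.card_filter_add_card_filter_not
        (s := (univ : Finset (Fin n))) (p := fun y => σ (Sum.inr y) < σ (Sum.inl x))
      have h6 : (univ.filter fun y : Fin n => ¬ σ (Sum.inr y) < σ (Sum.inl x))
          = univ.filter fun y : Fin n => σ (Sum.inl x) < σ (Sum.inr y) := by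
        ext y
        simp only [Finset.mem_filter, Finset.mem_univ, true_and, not_lt]
        constructor
        · intro h
          exact lt_of_le_of_ne h (hne x y)
        · intro h
          exact le_of_lt h
      rw [h6] at h5
      simpa using h5
    congr 1
    omega
  have hVIR : ∀ y : Fin n, vertexImbalance G σ (Sum.inr y)
      = ((m : ℤ) - 2 * ((univ.filter fun x : Fin m =>
          σ (Sum.inl x) < σ (Sum.inr y)).card : ℤ)).natAbs := by
    intro y
    rw [vertexImbalance]
    have h1 : (univ.filter fun u : Fin m ⊕ Fin n => G.Adj (Sum.inr y) u ∧ σ u < σ (Sum.inr y))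
        = (univ.filter fun x : Fin m => σ (Sum.inl x) < σ (Sum.inr y)).map
            ⟨Sum.inl, Sum.inl_injective⟩ := by
      ext u
      rcases u with x | y' <;> simp [hG]
    have h2 : (univ.filter fun u : Fin m ⊕ Fin n => G.Adj (Sum.inr y) u ∧ σ (Sum.inr y) < σ u)
        = (univ.filter fun x : Fin m => σ (Sum.inr y) < σ (Sum.inl x)).map
            ⟨Sum.inl, Sum.inl_injective⟩ := by
      ext u
      rcases u with x | y' <;> simp [hG]
    rw [h1, h2, Finset.card_map, Finset.card_map]
    have h3 : (univ.filter fun x : Fin m => σ (Sum.inl x) < σ (Sum.inr y)).card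
        + (univ.filter fun x : Fin m => σ (Sum.inr y) < σ (Sum.inl x)).card = m := by
      have h5 := Finset.card_filter_add_card_filter_not
        (s := (univ : Finset (Fin m))) (p := fun x => σ (Sum.inl x) < σ (Sum.inr y))
      have h6 : (univ.filter fun x : Fin m => ¬ σ (Sum.inl x) < σ (Sum.inr y))
          = univ.filter fun x : Fin m => σ (Sum.inr y) < σ (Sum.inl x) := by
        ext x
        simp only [Finset.mem_filter, Finset.mem_univ, true_and, not_lt]
        constructor
        · intro h
          exact lt_of_le_of_ne h (Ne.symm (hne x y))
        · intro h
          exact le_of_lt h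
      rw [h6] at h5
      simpa using h5
    rw [show ((univ.filter fun x : Fin m => σ (Sum.inl x) < σ (Sum.inr y)).card : ℤ)
          - ((univ.filter fun x : Fin m => σ (Sum.inr y) < σ (Sum.inl x)).card : ℤ)
        = -(((m : ℤ) - 2 * ((univ.filter fun x : Fin m =>
            σ (Sum.inl x) < σ (Sum.inr y)).card : ℤ))) by omega, Int.natAbs_neg]
  rw [totalImbalance, Fintype.sum_sum_type]
  simp only [hVIL, hVIR]
  set e := Tuple.sort (fun x : Fin m => σ (Sum.inl x)) with he
  have hmono : Monotone ((fun x : Fin m => σ (Sum.inl x)) ∘ e) :=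
    Tuple.monotone_sort (fun x : Fin m => σ (Sum.inl x))
  rw [← Equiv.sum_comp e (fun x : Fin m => ((n : ℤ) - 2 * ((univ.filter fun y : Fin n =>
      σ (Sum.inl x) < σ (Sum.inr y)).card : ℤ)).natAbs)]
  set T : Fin n → Finset (Fin m) :=
    fun y => univ.filter fun i => σ (Sum.inl (e i)) < σ (Sum.inr y) with hT_def
  have hT : ∀ y, ∀ i j : Fin m, j ≤ i → i ∈ T y → j ∈ T y := by
    intro y i j hji hi
    simp only [hT_def, Finset.mem_filter, Finset.mem_univ, true_and] at hi ⊢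
    exact lt_of_le_of_lt (hmono hji) hi
  have key := abstract_bound m n T hT
  have hr_eq : ∀ i : Fin m, (univ.filter fun y : Fin n => i ∈ T y)
      = univ.filter fun y : Fin n => σ (Sum.inl (e i)) < σ (Sum.inr y) := by
    intro i; ext y; simp [hT_def]
  have ha_eq : ∀ y : Fin n, (T y).card
      = (univ.filter fun x : Fin m => σ (Sum.inl x) < σ (Sum.inr y)).card := by
    intro y
    have himg : ((univ.filter fun i : Fin m => σ (Sum.inl (e i)) < σ (Sum.inr y)).image e)
        = univ.filter fun x : Fin m => σ (Sum.inl x) < σ (Sum.inr y) := by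
      ext x
      simp only [Finset.mem_image, Finset.mem_filter, Finset.mem_univ, true_and]
      constructor
      · rintro ⟨i, hi, rfl⟩; exact hi
      · intro hx
        exact ⟨e.symm x, by simpa using hx, by simp⟩
    rw [hT_def, ← himg, Finset.card_image_of_injective _ e.injective]
  simp only [hr_eq, ha_eq] at key
  rw [← Nat.cast_le (α := ℤ)]
  push_cast [Int.natCast_natAbs]
  push_cast at key
  convert key using 2
end

section
/- The minimum imbalance of the complete bipartite graph K_{m,n} over all linear orderings of its vertices equals m·n + (m mod 2)·(n mod 2). -/
open Finset
open scoped Classical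

section PerVertex
variable {m n : ℕ} (σ : (Fin m ⊕ Fin n) ≃ Fin (Fintype.card (Fin m ⊕ Fin n)))

lemma vi_inl (i : Fin m) :
    vertexImbalance (completeBipartiteGraph (Fin m) (Fin n)) σ (Sum.inl i)
      = ((n : ℤ) - 2 * ((univ.filter fun j : Fin n => σ (Sum.inr j) < σ (Sum.inl i)).card : ℤ)).natAbs := by
  have e1 : (univ.filter fun u => (completeBipartiteGraph (Fin m) (Fin n)).Adj (Sum.inl i) u ∧ σ u < σ (Sum.inl i))
      = (univ.filter fun j : Fin n => σ (Sum.inr j) < σ (Sum.inl i)).map ⟨Sum.inr, Sum.inr_injective⟩ := by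
    ext u
    cases u with
    | inl a => simp
    | inr b => simp
  have e2 : (univ.filter fun u => (completeBipartiteGraph (Fin m) (Fin n)).Adj (Sum.inl i) u ∧ σ (Sum.inl i) < σ u)
      = (univ.filter fun j : Fin n => σ (Sum.inl i) < σ (Sum.inr j)).map ⟨Sum.inr, Sum.inr_injective⟩ := by
    ext u
    cases u with
    | inl a => simp
    | inr b => simp
  have hsum : (univ.filter fun j : Fin n => σ (Sum.inr j) < σ (Sum.inl i)).card
      + (univ.filter fun j : Fin n => σ (Sum.inl i) < σ (Sum.inr j)).card = n := by
    have h := Finset.card_filter_add_card_filter_not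
      (s := (univ : Finset (Fin n))) (p := fun j => σ (Sum.inr j) < σ (Sum.inl i))
    rw [Finset.card_univ, Fintype.card_fin] at h
    have h2 : (univ.filter fun j : Fin n => σ (Sum.inl i) < σ (Sum.inr j))
        = (univ.filter fun j : Fin n => ¬ σ (Sum.inr j) < σ (Sum.inl i)) := by
      apply Finset.filter_congr
      intro j _
      have hne : σ (Sum.inl i) ≠ σ (Sum.inr j) := by
        intro h'
        exact absurd (σ.injective h') (by simp)
      constructor
      · intro h' h''
        exact absurd (h''.trans h') (lt_irrefl _)
      · intro h'
        rcases lt_or_gt_of_ne hne with h'' | h''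
        · exact h''
        · exact absurd h'' h'
    rw [h2]
    exact h
  unfold vertexImbalance
  rw [e1, e2, Finset.card_map, Finset.card_map]
  omega

lemma vi_inr (j : Fin n) :
    vertexImbalance (completeBipartiteGraph (Fin m) (Fin n)) σ (Sum.inr j)
      = ((m : ℤ) - 2 * ((univ.filter fun i : Fin m => σ (Sum.inl i) < σ (Sum.inr j)).card : ℤ)).natAbs := by
  have e1 : (univ.filter fun u => (completeBipartiteGraph (Fin m) (Fin n)).Adj (Sum.inr j) u ∧ σ u < σ (Sum.inr j))
      = (univ.filter fun i : Fin m => σ (Sum.inl i) < σ (Sum.inr j)).map ⟨Sum.inl, Sum.inl_injective⟩ := by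
    ext u
    cases u with
    | inl a => simp
    | inr b => simp
  have e2 : (univ.filter fun u => (completeBipartiteGraph (Fin m) (Fin n)).Adj (Sum.inr j) u ∧ σ (Sum.inr j) < σ u)
      = (univ.filter fun i : Fin m => σ (Sum.inr j) < σ (Sum.inl i)).map ⟨Sum.inl, Sum.inl_injective⟩ := by
    ext u
    cases u with
    | inl a => simp
    | inr b => simp
  have hsum : (univ.filter fun i : Fin m => σ (Sum.inl i) < σ (Sum.inr j)).card
      + (univ.filter fun i : Fin m => σ (Sum.inr j) < σ (Sum.inl i)).card = m := by
    have h := Finset.card_filter_add_card_filter_not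
      (s := (univ : Finset (Fin m))) (p := fun i => σ (Sum.inl i) < σ (Sum.inr j))
    rw [Finset.card_univ, Fintype.card_fin] at h
    have h2 : (univ.filter fun i : Fin m => σ (Sum.inr j) < σ (Sum.inl i))
        = (univ.filter fun i : Fin m => ¬ σ (Sum.inl i) < σ (Sum.inr j)) := by
      apply Finset.filter_congr
      intro i _
      have hne : σ (Sum.inr j) ≠ σ (Sum.inl i) := by
        intro h'
        exact absurd (σ.injective h') (by simp)
      constructor
      · intro h' h''
        exact absurd (h''.trans h') (lt_irrefl _)
      · intro h'
        rcases lt_or_gt_of_ne hne with h'' | h''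
        · exact h''
        · exact absurd h'' h'
    rw [h2]
    exact h
  unfold vertexImbalance
  rw [e1, e2, Finset.card_map, Finset.card_map]
  omega

lemma totalImbalance_cbg :
    totalImbalance (completeBipartiteGraph (Fin m) (Fin n)) σ =
      (∑ i : Fin m, ((n : ℤ) - 2 * ((univ.filter fun j : Fin n => σ (Sum.inr j) < σ (Sum.inl i)).card : ℤ)).natAbs) +
      (∑ j : Fin n, ((m : ℤ) - 2 * ((univ.filter fun i : Fin m => σ (Sum.inl i) < σ (Sum.inr j)).card : ℤ)).natAbs) := by
  unfold totalImbalance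
  rw [Fintype.sum_sum_type]
  congr 1
  · exact Finset.sum_congr rfl fun i _ => vi_inl σ i
  · exact Finset.sum_congr rfl fun j _ => vi_inr σ j

end PerVertex

section Rank
variable {n N : ℕ}

lemma card_filter_val_lt_s2 (n t : ℕ) (ht : t ≤ n) :
    (univ.filter fun k : Fin n => (k : ℕ) < t).card = t := by
  have h : (univ.filter fun k : Fin n => (k : ℕ) < t).card = (Finset.range t).card := by
    refine Finset.card_bij (fun (k : Fin n) _ => (k : ℕ)) ?_ ?_ ?_
    · intro k hk
      simp only [Finset.mem_filter, Finset.mem_univ, true_and] at hk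
      simpa using hk
    · intro k _ k' _ h
      exact Fin.val_injective h
    · intro r hr
      simp only [Finset.mem_range] at hr
      exact ⟨⟨r, lt_of_lt_of_le hr ht⟩, by simp [hr], rfl⟩
  rw [h, Finset.card_range]

noncomputable def rk (p : Fin n → Fin N) (j : Fin n) : ℕ :=
  (univ.filter fun j' => p j' < p j).card

lemma rk_lt_card (p : Fin n → Fin N) (j : Fin n) : rk p j < n := by
  have h : (univ.filter fun j' => p j' < p j) ⊆ univ.erase j := by
    intro j' hj'
    simp only [Finset.mem_filter, Finset.mem_univ, true_and] at hj'
    refine Finset.mem_erase.2 ⟨?_, Finset.mem_univ _⟩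
    intro h'; rw [h'] at hj'; exact lt_irrefl _ hj'
  calc rk p j ≤ (univ.erase j).card := Finset.card_le_card h
    _ = n - 1 := by rw [Finset.card_erase_of_mem (Finset.mem_univ _), Finset.card_univ, Fintype.card_fin]
    _ < n := by have := j.isLt; omega

lemma rk_lt_rk (p : Fin n → Fin N) {j j' : Fin n} (h : p j < p j') : rk p j < rk p j' := by
  apply Finset.card_lt_card
  constructor
  · intro j'' hj''
    simp only [Finset.mem_filter, Finset.mem_univ, true_and] at hj'' ⊢
    exact hj''.trans h
  · intro hsub
    have := hsub (Finset.mem_filter.2 ⟨Finset.mem_univ j, h⟩)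
    simp only [Finset.mem_filter, Finset.mem_univ, true_and] at this
    exact lt_irrefl _ this

lemma lt_iff_rk_lt (p : Fin n → Fin N) (hp : Function.Injective p) (j j' : Fin n) :
    p j < p j' ↔ rk p j < rk p j' := by
  constructor
  · exact rk_lt_rk p
  · intro h
    rcases lt_trichotomy (p j) (p j') with h' | h' | h'
    · exact h'
    · exact absurd (hp h') (by intro he; rw [he] at h; exact lt_irrefl _ h)
    · exact absurd (rk_lt_rk p h') (by omega)

noncomputable def rankFn (p : Fin n → Fin N) (j : Fin n) : Fin n :=
  ⟨rk p j, rk_lt_card p j⟩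

lemma rankFn_injective (p : Fin n → Fin N) (hp : Function.Injective p) :
    Function.Injective (rankFn p) := by
  intro j j' h
  have h' : rk p j = rk p j' := congrArg Fin.val h
  by_contra hne
  rcases lt_or_gt_of_ne (fun he : p j = p j' => hne (hp he)) with h'' | h''
  · exact absurd (rk_lt_rk p h'') (by omega)
  · exact absurd (rk_lt_rk p h'') (by omega)

noncomputable def rankEquiv (p : Fin n → Fin N) (hp : Function.Injective p) : Fin n ≃ Fin n :=
  Equiv.ofBijective (rankFn p)
    ((Fintype.bijective_iff_injective_and_card _).2 ⟨rankFn_injective p hp, rfl⟩)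

noncomputable def iota (p : Fin n → Fin N) (hp : Function.Injective p) (j : Fin n) : Fin n :=
  (rankEquiv p hp).symm (Fin.rev (rankFn p j))

lemma rankFn_iota (p : Fin n → Fin N) (hp : Function.Injective p) (j : Fin n) :
    rankFn p (iota p hp j) = Fin.rev (rankFn p j) := by
  have : rankEquiv p hp (iota p hp j) = Fin.rev (rankFn p j) := Equiv.apply_symm_apply _ _
  exact this

lemma iota_invol (p : Fin n → Fin N) (hp : Function.Injective p) :
    Function.Involutive (iota p hp) := by
  intro j
  apply rankFn_injective p hp
  rw [rankFn_iota, rankFn_iota, Fin.rev_rev]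

lemma iota_fixed (p : Fin n → Fin N) (hp : Function.Injective p) (hn : n % 2 = 1) :
    ∃ j, iota p hp j = j := by
  refine ⟨(rankEquiv p hp).symm ⟨n / 2, by omega⟩, ?_⟩
  apply rankFn_injective p hp
  rw [rankFn_iota]
  have hr : rankFn p ((rankEquiv p hp).symm ⟨n / 2, by omega⟩) = ⟨n / 2, by omega⟩ :=
    Equiv.apply_symm_apply (rankEquiv p hp) _
  rw [hr]
  ext
  simp [Fin.val_rev]
  omega

-- rank vs count below a cut
lemma rk_lt_count_iff (p : Fin n → Fin N) (x : Fin N) (hx : ∀ j, p j ≠ x) (j : Fin n) :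
    p j < x ↔ rk p j < (univ.filter fun j' => p j' < x).card := by
  constructor
  · intro h
    have hsub : (univ.filter fun j' => p j' < p j) ⊆ (univ.filter fun j' => p j' < x).erase j := by
      intro j' hj'
      simp only [Finset.mem_filter, Finset.mem_univ, true_and] at hj'
      refine Finset.mem_erase.2 ⟨?_, Finset.mem_filter.2 ⟨Finset.mem_univ _, hj'.trans h⟩⟩
      intro he; rw [he] at hj'; exact lt_irrefl _ hj'
    have hmem : j ∈ (univ.filter fun j' => p j' < x) := Finset.mem_filter.2 ⟨Finset.mem_univ _, h⟩
    have h1 := Finset.card_le_card hsub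
    rw [Finset.card_erase_of_mem hmem] at h1
    have h2 : 1 ≤ (univ.filter fun j' => p j' < x).card := Finset.card_pos.2 ⟨j, hmem⟩
    unfold rk
    omega
  · intro h
    by_contra hlt
    have hx' : x < p j := by
      rcases lt_trichotomy (p j) x with h' | h' | h'
      · exact absurd h' hlt
      · exact absurd h' (hx j)
      · exact h'
    have hsub : (univ.filter fun j' => p j' < x) ⊆ (univ.filter fun j' => p j' < p j) := by
      intro j' hj'
      simp only [Finset.mem_filter, Finset.mem_univ, true_and] at hj' ⊢
      exact hj'.trans hx'
    have := Finset.card_le_card hsub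
    unfold rk at h
    omega

lemma c_eq_min (p : Fin n → Fin N) (hp : Function.Injective p) (x : Fin N) (hx : ∀ j, p j ≠ x) :
    (univ.filter fun j => p j < x ∧ x < p (iota p hp j)).card
      = min ((univ.filter fun j => p j < x).card) (n - (univ.filter fun j => p j < x).card) := by
  set A := (univ.filter fun j => p j < x).card with hA
  have hAn : A ≤ n := by
    rw [hA]
    calc (univ.filter fun j => p j < x).card ≤ (univ : Finset (Fin n)).card := Finset.card_le_card (Finset.filter_subset _ _)
      _ = n := by rw [Finset.card_univ, Fintype.card_fin]
  have step1 : (univ.filter fun j => p j < x ∧ x < p (iota p hp j))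
      = (univ.filter fun j => ((rankFn p j : ℕ) < A ∧ ¬ ((Fin.rev (rankFn p j) : ℕ) < A))) := by
    apply Finset.filter_congr
    intro j _
    have hc1 : p j < x ↔ (rankFn p j : ℕ) < A := rk_lt_count_iff p x hx j
    have hc2 : x < p (iota p hp j) ↔ ¬ ((Fin.rev (rankFn p j) : ℕ) < A) := by
      have h1 : p (iota p hp j) < x ↔ (rankFn p (iota p hp j) : ℕ) < A := rk_lt_count_iff p x hx _
      rw [rankFn_iota] at h1
      constructor
      · intro h h'
        have := h1.2 h'
        exact absurd (h.trans this) (lt_irrefl _)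
      · intro h
        rcases lt_trichotomy (p (iota p hp j)) x with h' | h' | h'
        · exact absurd (h1.1 h') h
        · exact absurd h' (hx _)
        · exact h'
    rw [hc1, hc2]
  rw [step1]
  have step2 : (univ.filter fun j => ((rankFn p j : ℕ) < A ∧ ¬ ((Fin.rev (rankFn p j) : ℕ) < A))).card
      = (univ.filter fun k : Fin n => ((k : ℕ) < A ∧ ¬ ((Fin.rev k : ℕ) < A))).card := by
    apply Finset.card_bij (fun j _ => rankFn p j)
    · intro j hj
      simp only [Finset.mem_filter, Finset.mem_univ, true_and] at hj ⊢
      exact hj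
    · intro j _ j' _ h
      exact rankFn_injective p hp h
    · intro k hk
      simp only [Finset.mem_filter, Finset.mem_univ, true_and] at hk
      refine ⟨(rankEquiv p hp).symm k, ?_, ?_⟩
      · have : rankFn p ((rankEquiv p hp).symm k) = k := Equiv.apply_symm_apply (rankEquiv p hp) k
        simp only [Finset.mem_filter, Finset.mem_univ, true_and, this]
        exact hk
      · exact Equiv.apply_symm_apply (rankEquiv p hp) k
  rw [step2]
  have step3 : (univ.filter fun k : Fin n => ((k : ℕ) < A ∧ ¬ ((Fin.rev k : ℕ) < A)))
      = (univ.filter fun k : Fin n => (k : ℕ) < min A (n - A)) := by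
    apply Finset.filter_congr
    intro k _
    have hk := k.isLt
    rw [Fin.val_rev]
    omega
  rw [step3]
  exact card_filter_val_lt_s2 n (min A (n - A)) (by omega)

end Rank

section Quad
variable {N : ℕ}

lemma quad_le_one (a a' b b' : Fin N) :
    ((if a < b ∧ b < a' then 1 else 0) + (if b < a ∧ a < b' then 1 else 0)
      + ((if a' < b' ∧ b' < a then 1 else 0) + (if b' < a' ∧ a' < b then 1 else 0)) : ℕ) ≤ 1 := by
  simp only [Fin.lt_def]
  split_ifs <;> omega

lemma quad_eq_zero (a b : Fin N) :
    ((if a < b ∧ b < a then 1 else 0) + (if b < a ∧ a < b then 1 else 0)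
      + ((if a < b ∧ b < a then 1 else 0) + (if b < a ∧ a < b then 1 else 0)) : ℕ) = 0 := by
  simp only [Fin.lt_def]
  split_ifs <;> omega

end Quad

section Lower
variable {m n N : ℕ}

noncomputable def Xf (q : Fin m → Fin N) (p : Fin n → Fin N) (hp : Function.Injective p)
    (i : Fin m) (j : Fin n) : ℕ :=
  if p j < q i ∧ q i < p (iota p hp j) then 1 else 0

noncomputable def Yf (q : Fin m → Fin N) (p : Fin n → Fin N) (hq : Function.Injective q)
    (i : Fin m) (j : Fin n) : ℕ :=
  if q i < p j ∧ p j < q (iota q hq i) then 1 else 0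

lemma quad_bound (q : Fin m → Fin N) (p : Fin n → Fin N)
    (hq : Function.Injective q) (hp : Function.Injective p) (i : Fin m) (j : Fin n) :
    Xf q p hp i j + Yf q p hq i j
      + (Xf q p hp (iota q hq i) (iota p hp j) + Yf q p hq (iota q hq i) (iota p hp j)) ≤ 1 := by
  unfold Xf Yf
  rw [iota_invol p hp j, iota_invol q hq i]
  exact quad_le_one (p j) (p (iota p hp j)) (q i) (q (iota q hq i))

lemma quad_zero (q : Fin m → Fin N) (p : Fin n → Fin N)
    (hq : Function.Injective q) (hp : Function.Injective p) {i0 : Fin m} {j0 : Fin n}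
    (hi0 : iota q hq i0 = i0) (hj0 : iota p hp j0 = j0) :
    Xf q p hp i0 j0 + Yf q p hq i0 j0
      + (Xf q p hp (iota q hq i0) (iota p hp j0) + Yf q p hq (iota q hq i0) (iota p hp j0)) = 0 := by
  unfold Xf Yf
  simp only [hi0, hj0]
  exact quad_eq_zero (p j0) (q i0)

lemma natAbs_eq_sub_min {A n c : ℕ} (h1 : c = min A (n - A)) (h2 : A ≤ n) :
    ((n : ℤ) - 2 * (A : ℤ)).natAbs = n - 2 * c ∧ (n - 2 * c) + 2 * c = n := by
  rcases le_total A (n - A) with h | h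
  · rw [min_eq_left h] at h1
    constructor <;> omega
  · rw [min_eq_right h] at h1
    constructor <;> omega

lemma lower_bound_abstract (m n N : ℕ) (q : Fin m → Fin N) (p : Fin n → Fin N)
    (hq : Function.Injective q) (hp : Function.Injective p)
    (hqp : ∀ i j, q i ≠ p j) :
    m * n + m % 2 * (n % 2) ≤
      (∑ i : Fin m, ((n : ℤ) - 2 * ((univ.filter fun j : Fin n => p j < q i).card : ℤ)).natAbs) +
      (∑ j : Fin n, ((m : ℤ) - 2 * ((univ.filter fun i : Fin m => q i < p j).card : ℤ)).natAbs) := by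
  classical
  have hce : ∀ i, (univ.filter fun j : Fin n => p j < q i ∧ q i < p (iota p hp j)).card
      = min ((univ.filter fun j : Fin n => p j < q i).card)
        (n - (univ.filter fun j : Fin n => p j < q i).card) :=
    fun i => c_eq_min p hp (q i) (fun j h => hqp i j h.symm)
  have hde : ∀ j, (univ.filter fun i : Fin m => q i < p j ∧ p j < q (iota q hq i)).card
      = min ((univ.filter fun i : Fin m => q i < p j).card)
        (m - (univ.filter fun i : Fin m => q i < p j).card) :=
    fun j => c_eq_min q hq (p j) (fun i => hqp i j)
  set c : Fin m → ℕ := fun i => (univ.filter fun j : Fin n => p j < q i ∧ q i < p (iota p hp j)).card with hcdef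
  set d : Fin n → ℕ := fun j => (univ.filter fun i : Fin m => q i < p j ∧ p j < q (iota q hq i)).card with hddef
  have hAle : ∀ i, (univ.filter fun j : Fin n => p j < q i).card ≤ n := by
    intro i
    calc (univ.filter fun j : Fin n => p j < q i).card ≤ (univ : Finset (Fin n)).card :=
          Finset.card_le_card (Finset.filter_subset _ _)
      _ = n := by simp
  have hBle : ∀ j, (univ.filter fun i : Fin m => q i < p j).card ≤ m := by
    intro j
    calc (univ.filter fun i : Fin m => q i < p j).card ≤ (univ : Finset (Fin m)).card :=
          Finset.card_le_card (Finset.filter_subset _ _)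
      _ = m := by simp
  have hterm1 : ∀ i, ((n : ℤ) - 2 * ((univ.filter fun j : Fin n => p j < q i).card : ℤ)).natAbs
      = n - 2 * c i := fun i => (natAbs_eq_sub_min (hce i) (hAle i)).1
  have hterm2 : ∀ j, ((m : ℤ) - 2 * ((univ.filter fun i : Fin m => q i < p j).card : ℤ)).natAbs
      = m - 2 * d j := fun j => (natAbs_eq_sub_min (hde j) (hBle j)).1
  rw [Finset.sum_congr rfl (fun i _ => hterm1 i), Finset.sum_congr rfl (fun j _ => hterm2 j)]
  have hSc : (∑ i, (n - 2 * c i)) + 2 * (∑ i, c i) = m * n := by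
    rw [Finset.mul_sum, ← Finset.sum_add_distrib]
    rw [Finset.sum_congr rfl (fun i (_ : i ∈ univ) => (natAbs_eq_sub_min (hce i) (hAle i)).2)]
    simp [Finset.sum_const, Finset.card_univ, mul_comm]
  have hSd : (∑ j, (m - 2 * d j)) + 2 * (∑ j, d j) = n * m := by
    rw [Finset.mul_sum, ← Finset.sum_add_distrib]
    rw [Finset.sum_congr rfl (fun j (_ : j ∈ univ) => (natAbs_eq_sub_min (hde j) (hBle j)).2)]
    simp [Finset.sum_const, Finset.card_univ, mul_comm]
  have hkey : 2 * ((∑ i, c i) + (∑ j, d j)) + m % 2 * (n % 2) ≤ m * n := by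
    have hX : ∀ i, c i = ∑ j, Xf q p hp i j := by
      intro i; rw [hcdef]; exact Finset.card_filter _ _
    have hY : ∀ j, d j = ∑ i, Yf q p hq i j := by
      intro j; rw [hddef]; exact Finset.card_filter _ _
    have hsum1 : (∑ i, c i) + (∑ j, d j) = ∑ i, ∑ j, (Xf q p hp i j + Yf q p hq i j) := by
      rw [Finset.sum_congr rfl (fun i (_ : i ∈ univ) =>
        (Finset.sum_add_distrib (f := fun j => Xf q p hp i j) (g := fun j => Yf q p hq i j))),
        Finset.sum_add_distrib]
      congr 1
      · exact Finset.sum_congr rfl (fun i _ => hX i)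
      · rw [Finset.sum_congr rfl (fun j (_ : j ∈ univ) => hY j)]
        exact Finset.sum_comm
    have hsum2 : (∑ i, c i) + (∑ j, d j)
        = ∑ i, ∑ j, (Xf q p hp (iota q hq i) (iota p hp j) + Yf q p hq (iota q hq i) (iota p hp j)) := by
      rw [hsum1]
      have houter : ∑ i, (∑ j, (Xf q p hp (iota q hq i) (iota p hp j)
            + Yf q p hq (iota q hq i) (iota p hp j)))
          = ∑ i, (∑ j, (Xf q p hp i j + Yf q p hq i j)) := by
        have hin : ∀ i : Fin m, ∑ j, (Xf q p hp i (iota p hp j) + Yf q p hq i (iota p hp j))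
            = ∑ j, (Xf q p hp i j + Yf q p hq i j) :=
          fun i => Function.Bijective.sum_comp (iota_invol p hp).bijective
            (fun j => Xf q p hp i j + Yf q p hq i j)
        calc ∑ i, (∑ j, (Xf q p hp (iota q hq i) (iota p hp j) + Yf q p hq (iota q hq i) (iota p hp j)))
            = ∑ i, (∑ j, (Xf q p hp i (iota p hp j) + Yf q p hq i (iota p hp j))) :=
              Function.Bijective.sum_comp (iota_invol q hq).bijective
                (fun i => ∑ j, (Xf q p hp i (iota p hp j) + Yf q p hq i (iota p hp j)))
          _ = ∑ i, (∑ j, (Xf q p hp i j + Yf q p hq i j)) :=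
              Finset.sum_congr rfl (fun i _ => hin i)
      exact houter.symm
    have hQ : 2 * ((∑ i, c i) + (∑ j, d j))
        = ∑ i, ∑ j, ((Xf q p hp i j + Yf q p hq i j)
            + (Xf q p hp (iota q hq i) (iota p hp j) + Yf q p hq (iota q hq i) (iota p hp j))) := by
      rw [Finset.sum_congr rfl (fun i (_ : i ∈ univ) =>
        (Finset.sum_add_distrib
          (f := fun j => Xf q p hp i j + Yf q p hq i j)
          (g := fun j => Xf q p hp (iota q hq i) (iota p hp j) + Yf q p hq (iota q hq i) (iota p hp j)))),
        Finset.sum_add_distrib, ← hsum1, ← hsum2]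
      omega
    rw [hQ]
    by_cases hpar : m % 2 = 1 ∧ n % 2 = 1
    · obtain ⟨i0, hi0⟩ := iota_fixed q hq hpar.1
      obtain ⟨j0, hj0⟩ := iota_fixed p hp hpar.2
      have hm1 : 1 ≤ m := by omega
      have hn1 : 1 ≤ n := by omega
      have hrow : ∀ i : Fin m, (∑ j, ((Xf q p hp i j + Yf q p hq i j)
            + (Xf q p hp (iota q hq i) (iota p hp j) + Yf q p hq (iota q hq i) (iota p hp j)))) ≤ n := by
        intro i
        calc _ ≤ ∑ _j : Fin n, 1 := Finset.sum_le_sum (fun j _ => quad_bound q p hq hp i j)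
          _ = n := by simp
      have hrow0 : (∑ j, ((Xf q p hp i0 j + Yf q p hq i0 j)
            + (Xf q p hp (iota q hq i0) (iota p hp j) + Yf q p hq (iota q hq i0) (iota p hp j)))) ≤ n - 1 := by
        rw [← Finset.add_sum_erase univ _ (Finset.mem_univ j0)]
        rw [quad_zero q p hq hp hi0 hj0, zero_add]
        calc _ ≤ ∑ _j ∈ univ.erase j0, 1 :=
              Finset.sum_le_sum (fun j _ => quad_bound q p hq hp i0 j)
          _ = (univ.erase j0).card := by simp
          _ = n - 1 := by
              rw [Finset.card_erase_of_mem (Finset.mem_univ _), Finset.card_univ, Fintype.card_fin]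
      have htot : (∑ i, ∑ j, ((Xf q p hp i j + Yf q p hq i j)
            + (Xf q p hp (iota q hq i) (iota p hp j) + Yf q p hq (iota q hq i) (iota p hp j))))
          ≤ (n - 1) + (m - 1) * n := by
        rw [← Finset.add_sum_erase univ _ (Finset.mem_univ i0)]
        refine Nat.add_le_add hrow0 ?_
        calc _ ≤ ∑ _i ∈ univ.erase i0, n := Finset.sum_le_sum (fun i _ => hrow i)
          _ = (univ.erase i0).card * n := by rw [Finset.sum_const, smul_eq_mul]
          _ = (m - 1) * n := by
              rw [Finset.card_erase_of_mem (Finset.mem_univ _), Finset.card_univ, Fintype.card_fin]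
      have hmul : (m - 1) * n + n = m * n := by
        obtain ⟨m', rfl⟩ : ∃ m', m = m' + 1 := ⟨m - 1, by omega⟩
        simp [Nat.add_mul]
      rw [hpar.1, hpar.2]
      omega
    · have hpar0 : m % 2 * (n % 2) = 0 := by
        rcases Nat.mod_two_eq_zero_or_one m with h | h
        · rw [h]; ring
        · rcases Nat.mod_two_eq_zero_or_one n with h' | h'
          · rw [h']; ring
          · exact absurd ⟨h, h'⟩ hpar
      rw [hpar0, Nat.add_zero]
      calc (∑ i : Fin m, ∑ j : Fin n, ((Xf q p hp i j + Yf q p hq i j)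
            + (Xf q p hp (iota q hq i) (iota p hp j) + Yf q p hq (iota q hq i) (iota p hp j))))
          ≤ ∑ _i : Fin m, ∑ _j : Fin n, 1 := by
            apply Finset.sum_le_sum
            intro i _
            exact Finset.sum_le_sum (fun j _ => quad_bound q p hq hp i j)
        _ = m * n := by simp [mul_comm]
  have hmn : m * n = n * m := Nat.mul_comm m n
  omega

end Lower

section Upper
variable {m n : ℕ}

noncomputable def fpos (m n : ℕ) : Fin m ⊕ Fin n → Fin (m + n)
  | Sum.inl i => if (i : ℕ) < m - m / 2 then ⟨n / 2 + i, by have := i.isLt; omega⟩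
      else ⟨n + i, by have := i.isLt; omega⟩
  | Sum.inr j => if (j : ℕ) < n / 2 then ⟨j, by have := j.isLt; omega⟩
      else ⟨(j : ℕ) + (m - m / 2), by have := j.isLt; omega⟩

lemma fpos_val_inl (i : Fin m) : ((fpos m n (Sum.inl i) : ℕ))
    = if (i : ℕ) < m - m / 2 then n / 2 + i else n + i := by
  simp only [fpos]
  split_ifs <;> rfl

lemma fpos_val_inr (j : Fin n) : ((fpos m n (Sum.inr j) : ℕ))
    = if (j : ℕ) < n / 2 then (j : ℕ) else (j : ℕ) + (m - m / 2) := by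
  simp only [fpos]
  split_ifs <;> rfl

lemma fpos_inj : Function.Injective (fpos m n) := by
  intro u v h
  have h' : ((fpos m n u : ℕ)) = ((fpos m n v : ℕ)) := congrArg Fin.val h
  cases u with
  | inl i =>
    cases v with
    | inl i' =>
      rw [fpos_val_inl, fpos_val_inl] at h'
      have hi := i.isLt; have hi' := i'.isLt
      split_ifs at h' <;> exact congrArg Sum.inl (Fin.ext (by omega))
    | inr j' =>
      rw [fpos_val_inl, fpos_val_inr] at h'
      have hi := i.isLt; have hj' := j'.isLt
      split_ifs at h' <;> (exfalso; omega)
  | inr j =>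
    cases v with
    | inl i' =>
      rw [fpos_val_inr, fpos_val_inl] at h'
      have hj := j.isLt; have hi' := i'.isLt
      split_ifs at h' <;> (exfalso; omega)
    | inr j' =>
      rw [fpos_val_inr, fpos_val_inr] at h'
      have hj := j.isLt; have hj' := j'.isLt
      split_ifs at h' <;> exact congrArg Sum.inr (Fin.ext (by omega))

noncomputable def sigma0 (m n : ℕ) : (Fin m ⊕ Fin n) ≃ Fin (Fintype.card (Fin m ⊕ Fin n)) :=
  (Equiv.ofBijective (fpos m n)
    ((Fintype.bijective_iff_injective_and_card _).2 ⟨fpos_inj, by simp⟩)).trans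
    (finCongr (by simp))

lemma sigma0_lt_iff (u v : Fin m ⊕ Fin n) :
    sigma0 m n u < sigma0 m n v ↔ ((fpos m n u : ℕ)) < ((fpos m n v : ℕ)) := by
  simp only [sigma0, Equiv.trans_apply, finCongr_apply, Fin.lt_def, Fin.coe_cast]
  rfl

lemma countA (i : Fin m) :
    (univ.filter fun j : Fin n => sigma0 m n (Sum.inr j) < sigma0 m n (Sum.inl i)).card
      = if (i : ℕ) < m - m / 2 then n / 2 else n := by
  by_cases hi : (i : ℕ) < m - m / 2
  · rw [if_pos hi]
    have hset : (univ.filter fun j : Fin n => sigma0 m n (Sum.inr j) < sigma0 m n (Sum.inl i))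
        = univ.filter fun j : Fin n => (j : ℕ) < n / 2 := by
      apply Finset.filter_congr
      intro j _
      rw [sigma0_lt_iff, fpos_val_inl, fpos_val_inr, if_pos hi]
      have hj := j.isLt
      split_ifs with hj' <;> omega
    rw [hset, card_filter_val_lt_s2 n (n / 2) (by omega)]
  · rw [if_neg hi]
    have hset : (univ.filter fun j : Fin n => sigma0 m n (Sum.inr j) < sigma0 m n (Sum.inl i))
        = (univ : Finset (Fin n)) := by
      apply Finset.filter_true_of_mem
      intro j _
      rw [sigma0_lt_iff, fpos_val_inl, fpos_val_inr, if_neg hi]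
      have hj := j.isLt
      have hi2 := i.isLt
      split_ifs with hj' <;> omega
    rw [hset, Finset.card_univ, Fintype.card_fin]

lemma countB (j : Fin n) :
    (univ.filter fun i : Fin m => sigma0 m n (Sum.inl i) < sigma0 m n (Sum.inr j)).card
      = if (j : ℕ) < n / 2 then 0 else m - m / 2 := by
  by_cases hj : (j : ℕ) < n / 2
  · rw [if_pos hj]
    have hset : (univ.filter fun i : Fin m => sigma0 m n (Sum.inl i) < sigma0 m n (Sum.inr j))
        = (∅ : Finset (Fin m)) := by
      apply Finset.filter_false_of_mem
      intro i _
      rw [sigma0_lt_iff, fpos_val_inl, fpos_val_inr, if_pos hj]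
      have hi := i.isLt
      split_ifs with hi' <;> omega
    rw [hset, Finset.card_empty]
  · rw [if_neg hj]
    have hset : (univ.filter fun i : Fin m => sigma0 m n (Sum.inl i) < sigma0 m n (Sum.inr j))
        = univ.filter fun i : Fin m => (i : ℕ) < m - m / 2 := by
      apply Finset.filter_congr
      intro i _
      rw [sigma0_lt_iff, fpos_val_inl, fpos_val_inr, if_neg hj]
      have hi := i.isLt
      have hj2 := j.isLt
      split_ifs with hi' <;> omega
    rw [hset, card_filter_val_lt_s2 m (m - m / 2) (by omega)]

lemma upper_value :
    totalImbalance (completeBipartiteGraph (Fin m) (Fin n)) (sigma0 m n)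
      = m * n + m % 2 * (n % 2) := by
  rw [totalImbalance_cbg]
  have h1 : ∀ i : Fin m,
      ((n : ℤ) - 2 * ((univ.filter fun j : Fin n =>
          sigma0 m n (Sum.inr j) < sigma0 m n (Sum.inl i)).card : ℤ)).natAbs
        = if (i : ℕ) < m - m / 2 then n % 2 else n := by
    intro i
    rw [countA i]
    split_ifs <;> omega
  have h2 : ∀ j : Fin n,
      ((m : ℤ) - 2 * ((univ.filter fun i : Fin m =>
          sigma0 m n (Sum.inl i) < sigma0 m n (Sum.inr j)).card : ℤ)).natAbs
        = if (j : ℕ) < n / 2 then m else m % 2 := by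
    intro j
    rw [countB j]
    split_ifs <;> omega
  rw [Finset.sum_congr rfl (fun i _ => h1 i), Finset.sum_congr rfl (fun j _ => h2 j)]
  have hnotm : (univ.filter fun i : Fin m => ¬ (i : ℕ) < m - m / 2).card = m - (m - m / 2) := by
    have h := Finset.card_filter_add_card_filter_not
      (s := (univ : Finset (Fin m))) (p := fun i : Fin m => (i : ℕ) < m - m / 2)
    rw [Finset.card_univ, Fintype.card_fin, card_filter_val_lt_s2 m (m - m / 2) (by omega)] at h
    omega
  have hnotn : (univ.filter fun j : Fin n => ¬ (j : ℕ) < n / 2).card = n - n / 2 := by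
    have h := Finset.card_filter_add_card_filter_not
      (s := (univ : Finset (Fin n))) (p := fun j : Fin n => (j : ℕ) < n / 2)
    rw [Finset.card_univ, Fintype.card_fin, card_filter_val_lt_s2 n (n / 2) (by omega)] at h
    omega
  rw [Finset.sum_ite, Finset.sum_const, Finset.sum_const, smul_eq_mul, smul_eq_mul,
    card_filter_val_lt_s2 m (m - m / 2) (by omega), hnotm]
  rw [Finset.sum_ite, Finset.sum_const, Finset.sum_const, smul_eq_mul, smul_eq_mul,
    card_filter_val_lt_s2 n (n / 2) (by omega), hnotn]
  -- arithmetic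
  obtain ⟨k, r, hm, hr⟩ : ∃ k r, m = 2 * k + r ∧ r < 2 := ⟨m / 2, m % 2, by omega, by omega⟩
  obtain ⟨l, s, hn0, hs⟩ : ∃ l s, n = 2 * l + s ∧ s < 2 := ⟨n / 2, n % 2, by omega, by omega⟩
  subst hm hn0
  have e1 : (2 * k + r) / 2 = k := by omega
  have e2 : (2 * k + r) % 2 = r := by omega
  have e3 : (2 * l + s) / 2 = l := by omega
  have e4 : (2 * l + s) % 2 = s := by omega
  rw [e1, e2, e3, e4]
  have e5 : 2 * k + r - k = k + r := by omega
  have e6 : 2 * k + r - (k + r) = k := by omega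
  have e7 : 2 * l + s - l = l + s := by omega
  rw [e5, e6, e7]
  ring

end Upper

theorem stmt2 (m n : ℕ) :
    IsLeast {k : ℕ | ∃ σ : (Fin m ⊕ Fin n) ≃ Fin (Fintype.card (Fin m ⊕ Fin n)),
        totalImbalance (completeBipartiteGraph (Fin m) (Fin n)) σ = k}
      (m * n + (m % 2) * (n % 2)) := by
  constructor
  · exact ⟨sigma0 m n, upper_value⟩
  · rintro k ⟨σ, rfl⟩
    rw [totalImbalance_cbg σ]
    exact lower_bound_abstract m n _ (fun i => σ (Sum.inl i)) (fun j => σ (Sum.inr j))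
      (fun a b h => Sum.inl_injective (σ.injective h))
      (fun a b h => Sum.inr_injective (σ.injective h))
      (fun i j h => by simpa using σ.injective h)
end
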